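/- Let ε and δ be real numbers with 0 < ε < 1 and 0 < δ ≤ 1, let m, p be natural numbers with m ≥ 1 and p ≥ 1, let n and j be natural numbers, and set H = (m * p^(j+1))^n (the size of the MIL hypothesis space with p predicate symbols, m metarules in M_{i,j}, and at most n clauses). If s is a real number satisfying s ≥ (1/ε) * (n * Real.log m + (j+1) * n * Real.log p + Real.log (1/δ)), then H * (1 - ε)^s ≤ δ (where the exponentiation (1-ε)^s is real power). Consequently, the probability that some fixed hypothesis of true error greater than ε is consistent with s independent examples is at most δ after a union bound over the H hypotheses. -/

import Mathlib

/-! Since `1 - ε ≤ exp (-ε)`, we get `H (1 - ε)^s ≤ exp (log H - ε s)`, and the hypothesis on `s`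
says exactly `ε s ≥ log H + log (1 / δ)` once `log H` is expanded. -/

open Real

theorem one_sub_rpow_le_exp_neg_mul {ε s : ℝ} (hε : ε ≤ 1) (hs : 0 ≤ s) :
    (1 - ε) ^ s ≤ exp (-(ε * s)) := by
  calc (1 - ε) ^ s ≤ exp (-ε) ^ s :=
        rpow_le_rpow (sub_nonneg.2 hε) (by linarith [add_one_le_exp (-ε)]) hs
    _ = exp (-(ε * s)) := by rw [← exp_mul, neg_mul]

theorem mul_one_sub_rpow_le_of_log_add_log_le {N ε δ s : ℝ} (hN : 0 < N) (hε : ε ≤ 1)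
    (hδ : 0 < δ) (hs : 0 ≤ s) (hεs : log N + log (1 / δ) ≤ ε * s) :
    N * (1 - ε) ^ s ≤ δ :=
  calc N * (1 - ε) ^ s ≤ N * exp (-(ε * s)) :=
        mul_le_mul_of_nonneg_left (one_sub_rpow_le_exp_neg_mul hε hs) hN.le
    _ ≤ N * exp (-(log N + log (1 / δ))) := by gcongr
    _ = δ := by
        rw [neg_add, exp_add, exp_neg, exp_log hN, exp_neg, exp_log (by positivity)]
        field_simp

theorem log_mul_pow_pow {m p : ℝ} (hm : m ≠ 0) (hp : p ≠ 0) (n j : ℕ) :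
    log ((m * p ^ (j + 1)) ^ n) = n * log m + (j + 1) * n * log p := by
  rw [log_pow, log_mul hm (pow_ne_zero _ hp), log_pow]
  push_cast
  ring

theorem mil_sample_complexity (ε δ : ℝ) (hε : 0 < ε) (hε1 : ε < 1)
    (hδ : 0 < δ) (hδ1 : δ ≤ 1) (m p : ℕ) (hm : 1 ≤ m) (hp : 1 ≤ p)
    (n j : ℕ) (H : ℕ) (hH : H = (m * p ^ (j + 1)) ^ n) (s : ℝ)
    (hs : s ≥ (1 / ε) * ((n : ℝ) * Real.log (m : ℝ)
        + ((j : ℝ) + 1) * (n : ℝ) * Real.log (p : ℝ) + Real.log (1 / δ))) :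
    (H : ℝ) * (1 - ε) ^ s ≤ δ := by
  have hH1 : (1 : ℝ) ≤ H := by
    rw [Nat.one_le_cast, hH]
    exact Nat.one_le_pow _ _ (Nat.mul_pos hm (Nat.pow_pos hp))
  have hlogH : log H = n * log m + (j + 1) * n * log p := by
    rw [hH]
    push_cast
    exact log_mul_pow_pow (by positivity) (by positivity) n j
  rw [← hlogH, ge_iff_le, one_div_mul_eq_div, div_le_iff₀' hε] at hs
  have hbound : 0 ≤ log H + log (1 / δ) :=
    add_nonneg (log_nonneg hH1) (log_nonneg (one_le_one_div hδ hδ1))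
  have hs0 : 0 ≤ s := nonneg_of_mul_nonneg_right (hbound.trans hs) hε
  exact mul_one_sub_rpow_le_of_log_add_log_le (by positivity) hε1.le hδ hs0 hs
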